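/- For u ∈ S_n with u(n) ≠ n, set l := u^{-1}(n). Then ℓ((s_1 s_2 ⋯ s_{n−1}) u) = ℓ(u) + (n−1) − 2(n−l); equivalently, the Seidel shift u↑1 = (s_1⋯s_{n−1})u has length ℓ(u) + 2l − n − 1. -/

import Mathlib

open Fin.NatCast

/-- The adjacent transposition `s_i = (i, i+1)` of `S_n` (for `1 ≤ i ≤ n-1`),
realized as a permutation of `Fin n` using 0-indexed positions: it swaps
positions `i-1` and `i`. -/
def s (n : ℕ) [NeZero n] (i : ℕ) : Equiv.Perm (Fin n) :=
  Equiv.swap ((i - 1 : ℕ) : Fin n) ((i : ℕ) : Fin n)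

/-- The product `s_1 s_2 ⋯ s_{n-1}`, taken left to right. -/
def c (n : ℕ) [NeZero n] : Equiv.Perm (Fin n) :=
  ((List.range (n - 1)).map (fun i => s n (i + 1))).prod

/-- The inversion number (Coxeter length) of a permutation of `Fin n`. -/
def len {n : ℕ} (u : Equiv.Perm (Fin n)) : ℕ :=
  (Finset.univ.filter (fun p : Fin n × Fin n => p.1 < p.2 ∧ u p.2 < u p.1)).card

/-!
Left multiplication by `s_1 ⋯ s_{n-1}`, which is the rotation `i ↦ i + 1 (mod n)`, only relabels
values: it is increasing on all values but the largest and sends the largest value `n` to `1`.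
So the inversions not involving the position `q = u⁻¹(n)` are unchanged, while the `n - l`
inversions `(q, j)`, `j > q`, disappear and the `l - 1` pairs `(i, q)`, `i < q`, become inversions.
-/

open Equiv Finset

theorem Fin.coe_cycleRange {n : ℕ} (i j : Fin n) :
    (i.cycleRange j : ℕ) = if (j : ℕ) < i then (j : ℕ) + 1 else if (j : ℕ) = i then 0 else j := by
  rcases lt_or_ge i j with hij | hji
  · rw [Fin.cycleRange_of_gt hij, if_neg (by omega), if_neg (by omega)]
  · rw [Fin.coe_cycleRange_of_le hji]
    simp only [Fin.ext_iff, Fin.le_def] at *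
    split_ifs <;> omega

theorem Fin.cycleRange_natCast_succ {m k : ℕ} (hk : k < m) :
    Fin.cycleRange ((k + 1 : ℕ) : Fin (m + 1)) =
      Fin.cycleRange (k : Fin (m + 1)) * swap (k : Fin (m + 1)) ((k + 1 : ℕ) : Fin (m + 1)) := by
  have hk0 : ((k : Fin (m + 1)) : ℕ) = k := Fin.val_cast_of_lt (by omega)
  have hk1 : (((k + 1 : ℕ) : Fin (m + 1)) : ℕ) = k + 1 := Fin.val_cast_of_lt (by omega)
  ext j
  rw [Perm.mul_apply, swap_apply_def]
  split_ifs <;> simp only [Fin.coe_cycleRange, Fin.ext_iff, hk0, hk1] at * <;>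
    split_ifs <;> omega

theorem prod_map_range_s {m k : ℕ} (hk : k ≤ m) :
    ((List.range k).map (fun i => s (m + 1) (i + 1))).prod = Fin.cycleRange (k : Fin (m + 1)) := by
  induction k with
  | zero => simp
  | succ k ih =>
    rw [List.range_succ, List.map_append, List.prod_append, ih (by omega),
      Fin.cycleRange_natCast_succ (by omega)]
    simp [s]

theorem c_eq_finRotate (m : ℕ) : c (m + 1) = finRotate (m + 1) := by
  rw [c, Nat.add_sub_cancel, prod_map_range_s le_rfl, Fin.natCast_eq_last, Fin.cycleRange_last]

theorem len_eq_card_add_card_add_card {n : ℕ} (w : Perm (Fin n)) (q : Fin n) :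
    len w = #{p : Fin n × Fin n | p.1 < p.2 ∧ w p.2 < w p.1 ∧ p.1 ≠ q ∧ p.2 ≠ q} +
      #{i | i < q ∧ w q < w i} + #{j | q < j ∧ w j < w q} := by
  set inv := ({p : Fin n × Fin n | p.1 < p.2 ∧ w p.2 < w p.1} : Finset _)
  have hfst : #{p ∈ inv | p.1 = q} = #{j | q < j ∧ w j < w q} := by
    refine card_nbij' Prod.snd (fun j => (q, j)) ?_ ?_ ?_ ?_ <;> intro p <;> aesop
  have hsnd : #{p ∈ {p ∈ inv | ¬p.1 = q} | p.2 = q} = #{i | i < q ∧ w q < w i} := by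
    refine card_nbij' Prod.fst (fun i => (i, q)) ?_ ?_ ?_ ?_ <;> intro p <;> aesop
  have hrest : {p ∈ {p ∈ inv | ¬p.1 = q} | ¬p.2 = q} =
      ({p : Fin n × Fin n | p.1 < p.2 ∧ w p.2 < w p.1 ∧ p.1 ≠ q ∧ p.2 ≠ q} : Finset _) := by
    ext p; simp [inv, and_assoc]
  have hsplit₁ := card_filter_add_card_filter_not (s := inv) (fun p => p.1 = q)
  have hsplit₂ := card_filter_add_card_filter_not (s := {p ∈ inv | ¬p.1 = q}) (fun p => p.2 = q)
  show #inv = _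
  rw [← hrest, ← hfst, ← hsnd]
  omega

theorem finRotate_lt_finRotate_iff {m : ℕ} {a b : Fin (m + 1)} (ha : a ≠ Fin.last m)
    (hb : b ≠ Fin.last m) : finRotate (m + 1) a < finRotate (m + 1) b ↔ a < b := by
  rw [Fin.lt_def, coe_finRotate_of_ne_last ha, coe_finRotate_of_ne_last hb, Fin.lt_def]
  omega

theorem finRotate_ne_zero {m : ℕ} {a : Fin (m + 1)} (ha : a ≠ Fin.last m) :
    finRotate (m + 1) a ≠ 0 := by
  rw [Ne, Fin.ext_iff, coe_finRotate_of_ne_last ha]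
  exact Nat.succ_ne_zero _

theorem len_finRotate_mul_add {m : ℕ} (u : Perm (Fin (m + 1))) :
    len (finRotate (m + 1) * u) + (m - u⁻¹ (Fin.last m)) = len u + u⁻¹ (Fin.last m) := by
  set q := u⁻¹ (Fin.last m)
  set w := finRotate (m + 1) * u
  have hw : ∀ i, w i = finRotate (m + 1) (u i) := fun _ => rfl
  have huq : u q = Fin.last m := u.apply_symm_apply _
  have hne : ∀ i ≠ q, u i ≠ Fin.last m := fun i hi h => hi (u.injective (h.trans huq.symm))
  have hnear : #{p : Fin (m + 1) × Fin (m + 1) | p.1 < p.2 ∧ w p.2 < w p.1 ∧ p.1 ≠ q ∧ p.2 ≠ q} =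
      #{p : Fin (m + 1) × Fin (m + 1) | p.1 < p.2 ∧ u p.2 < u p.1 ∧ p.1 ≠ q ∧ p.2 ≠ q} := by
    refine congrArg card (filter_congr fun p _ => ?_)
    by_cases h₁ : p.1 = q
    · simp [h₁]
    by_cases h₂ : p.2 = q
    · simp [h₂]
    rw [hw, hw, finRotate_lt_finRotate_iff (hne _ h₂) (hne _ h₁)]
  have hbefore : #{i | i < q ∧ w q < w i} = q := by
    rw [← Fin.card_Iio, ← filter_gt_eq_Iio]
    refine congrArg card (filter_congr fun i _ => ?_)
    rw [hw, hw, huq, finRotate_last, and_iff_left_iff_imp]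
    exact fun hi => Fin.pos_iff_ne_zero.mpr (finRotate_ne_zero (hne _ hi.ne))
  have hafter : #{j | q < j ∧ w j < w q} = 0 := by
    simp [hw, huq]
  have hbefore' : #{i | i < q ∧ u q < u i} = 0 := by
    simp [huq, Fin.le_last]
  have hafter' : #{j | q < j ∧ u j < u q} = m - q := by
    have hIoi : #{j | q < j ∧ u j < u q} = #(Ioi q) := by
      rw [← filter_lt_eq_Ioi]
      refine congrArg card (filter_congr fun j _ => ?_)
      rw [huq, and_iff_left_iff_imp]
      exact fun hj => Fin.lt_last_iff_ne_last.mpr (hne _ hj.ne')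
    rw [hIoi, Fin.card_Ioi, Nat.add_sub_cancel]
  rw [len_eq_card_add_card_add_card w q, len_eq_card_add_card_add_card u q, hnear, hbefore,
    hafter, hbefore', hafter']
  omega

theorem stmt12_general (n : ℕ) [NeZero n] (u : Equiv.Perm (Fin n))
    (l : ℕ) (hl1 : 1 ≤ l)
    (hl : ((u⁻¹ ((n - 1 : ℕ) : Fin n) : Fin n) : ℕ) = l - 1) :
    (len (c n * u) : ℤ) = (len u : ℤ) + ((n : ℤ) - 1) - 2 * ((n : ℤ) - l) := by
  obtain ⟨m, rfl⟩ := Nat.exists_eq_succ_of_ne_zero (NeZero.ne n)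
  rw [Nat.succ_sub_one, Fin.natCast_eq_last] at hl
  have hrot := len_finRotate_mul_add u
  have hq := (u⁻¹ (Fin.last m)).isLt
  rw [c_eq_finRotate]
  omega

/-- If `u(n) ≠ n` and `l = u⁻¹(n)`, then
`ℓ((s_1 ⋯ s_{n-1}) u) = ℓ(u) + (n-1) − 2(n−l)`. -/
theorem stmt12 (n : ℕ) [NeZero n] (u : Equiv.Perm (Fin n))
    (hu : u ((n - 1 : ℕ) : Fin n) ≠ ((n - 1 : ℕ) : Fin n))
    (l : ℕ) (hl1 : 1 ≤ l) (hl2 : l ≤ n - 1)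
    (hl : ((u⁻¹ ((n - 1 : ℕ) : Fin n) : Fin n) : ℕ) = l - 1) :
    (len (c n * u) : ℤ) = (len u : ℤ) + ((n : ℤ) - 1) - 2 * ((n : ℤ) - l) :=
  stmt12_general n u l hl1 hl
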